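/- arXiv:1310.6643 — 2 statements merged into one kernel-verified Lean document; each statement's English description precedes it below -/
import Mathlib

section
/- Suppose that on a probability space: Z = (Z₁', Z₂')' is a random vector in ℝ^{d_z}; V = (V₁,…,V_{d_b}) is a random vector each of whose real components V_k has an atomless (continuous) distribution; for each k = 1,…,d_b, h_k : ℝ^{d_z} × ℝ → ℝ is measurable and strictly increasing in its second argument and X_k = h_k(Z, V_k); for each k = d_b+1,…,d_x, X_k = g_k(X₁,…,X_{d_b}, Z₁) for a measurable function g_k; B is a random vector in ℝ^{d_w}; and (B, V) is independent of Z. Let R_k = F_{X_k|Z}(X_k | Z) for k = 1,…,d_b, R = (R₁,…,R_{d_b}), and W = (1, X₁,…,X_{d_x}, Z₁')'. Then W and B are conditionally independent given σ(R). -/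
open MeasureTheory ProbabilityTheory

/-- `F` is a regular conditional distribution function of the real random variable `X` given
the random element `Z`: for each conditioning value `z`, `F z` is monotone and
right-continuous, `F · x` is measurable, and `fun ω => F (Z ω) x` is a version of the
conditional probability `P(X ≤ x | σ(Z))` for every `x`. -/
def IsRegCondCDF {Ω ζ : Type*} [MeasurableSpace Ω] [MeasurableSpace ζ]
    (μ : MeasureTheory.Measure Ω) (X : Ω → ℝ) (Z : Ω → ζ) (F : ζ → ℝ → ℝ) : Prop :=
  (∀ z, Monotone (F z)) ∧
  (∀ z x, ContinuousWithinAt (F z) (Set.Ici x) x) ∧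
  (∀ x, Measurable fun z => F z x) ∧
  (∀ x : ℝ, (fun ω => F (Z ω) x)
    =ᵐ[μ] μ[Set.indicator {ω | X ω ≤ x} (fun _ => (1 : ℝ))
      | MeasurableSpace.comap Z inferInstance])

/-!
Let `ν_k` be the law of `V_k` and `G_k` its distribution function. Since `V_k` is independent of
`Z` and `h_k(z, ·)` is strictly increasing, `F_{X_k|Z}(h_k(z, v) | z) = G_k(v)`, so `R_k = G_k(V_k)`
almost surely. Conversely the quantile function of `ν_k` recovers `V_k` from `R_k` almost surely,
because the flat pieces of `G_k` are `ν_k`-null. Exogeneity makes the conditional law of `B` given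
`(Z, V)` a function of `V` alone, hence of `R`; as `W` is a function of `(Z, V)` and `R` is a.e. a
function of `V`, the conditional law of `B` given `(R, W)` is its conditional law given `R`.
-/

open Set Filter Topology

theorem eq_of_continuousWithinAt_Ici_of_forall_rat_eq {f g : ℝ → ℝ}
    (hf : ∀ x, ContinuousWithinAt f (Ici x) x) (hg : ∀ x, ContinuousWithinAt g (Ici x) x)
    (h : ∀ q : ℚ, f q = g q) : f = g := by
  funext x
  set s := Ioi x ∩ range ((↑) : ℚ → ℝ)
  have hx : x ∈ closure s := by
    have := closure_mono (Rat.denseRange_cast.open_subset_closure_inter (isOpen_Ioi (a := x)))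
    rw [closure_closure, closure_Ioi] at this
    exact this self_mem_Ici
  have := mem_closure_iff_nhdsWithin_neBot.1 hx
  have hs : s ⊆ Ici x := fun y hy => mem_Ici.2 hy.1.le
  refine tendsto_nhds_unique ((hf x).mono hs) (((hg x).mono hs).congr' ?_)
  filter_upwards [self_mem_nhdsWithin] with y ⟨_, q, hq⟩
  rw [← hq, h q]

namespace ProbabilityTheory

/-- The infimum is taken in `EReal` so that `quantile ν` is monotone, hence measurable, also where
`{u | r ≤ cdf ν u}` is empty or unbounded below. -/
noncomputable def quantile (ν : Measure ℝ) (r : ℝ) : ℝ :=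
  (⨅ (u : ℝ) (_ : r ≤ cdf ν u), (u : EReal)).toReal

theorem measurable_quantile (ν : Measure ℝ) : Measurable (quantile ν) :=
  measurable_ereal_toReal.comp <| Monotone.measurable fun _ _ hrr' =>
    iInf₂_mono' fun u hu => ⟨u, hrr'.trans hu, le_rfl⟩

theorem measure_setOf_lt_cdf_le_eq_zero (ν : Measure ℝ) [IsProbabilityMeasure ν] (q : ℝ) :
    ν {v | q < v ∧ cdf ν v ≤ cdf ν q} = 0 := by
  set S := {v | q < v ∧ cdf ν v ≤ cdf ν q}
  have hnull : ∀ w ∈ S, ν (Ioc q w) = 0 := fun w hw => by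
    rw [← measure_cdf ν, StieltjesFunction.measure_Ioc, ENNReal.ofReal_eq_zero]
    linarith [hw.2]
  -- `S` is an interval with left end `q`, so near each of its points it lies in some `Ioc q w`.
  refine measure_null_of_locally_null S fun v hv => ?_
  by_cases hmax : ∃ w ∈ S, v < w
  · obtain ⟨w, hw, hvw⟩ := hmax
    exact ⟨Ioc q w, mem_nhdsWithin.2 ⟨Iio w, isOpen_Iio, hvw, fun y hy => ⟨hy.2.1, hy.1.le⟩⟩,
      hnull w hw⟩
  · push Not at hmax
    exact ⟨Ioc q v, mem_of_superset self_mem_nhdsWithin fun y hy => ⟨hy.1, hmax y hy⟩, hnull v hv⟩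

theorem quantile_cdf_ae_eq (ν : Measure ℝ) [IsProbabilityMeasure ν] :
    ∀ᵐ v ∂ν, quantile ν (cdf ν v) = v := by
  have hflat : ∀ᵐ v ∂ν, ∀ q : ℚ, ¬((q : ℝ) < v ∧ cdf ν v ≤ cdf ν q) :=
    ae_all_iff.2 fun q : ℚ => ae_iff.2 (by simpa using measure_setOf_lt_cdf_le_eq_zero ν q)
  filter_upwards [hflat] with v hv
  suffices h : ⨅ (u : ℝ) (_ : cdf ν v ≤ cdf ν u), (u : EReal) = v by simp [quantile, h]
  refine le_antisymm (iInf₂_le v (le_refl (cdf ν v)))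
    (le_iInf₂ fun u hu => EReal.coe_le_coe_iff.2 ?_)
  by_contra! huv
  obtain ⟨q, huq, hqv⟩ := exists_rat_btwn huv
  exact hv q ⟨hqv, hu.trans ((cdf ν).mono huq.le)⟩

theorem ae_eq_quantile_of_ae_eq_cdf {Ω ι : Type*} [Countable ι] {mΩ : MeasurableSpace Ω}
    {μ : Measure Ω} [IsProbabilityMeasure μ] {V R : Ω → ι → ℝ}
    (hV : ∀ k, Measurable fun ω => V ω k)
    (hR : R =ᵐ[μ] fun ω k => cdf (μ.map fun ω => V ω k) (V ω k)) :
    V =ᵐ[μ] fun ω k => quantile (μ.map fun ω => V ω k) (R ω k) := by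
  have : ∀ k, IsProbabilityMeasure (μ.map fun ω => V ω k) := fun k =>
    Measure.isProbabilityMeasure_map (hV k).aemeasurable
  filter_upwards [hR, ae_all_iff.2 fun k => ae_of_ae_map (hV k).aemeasurable
    (quantile_cdf_ae_eq (μ.map fun ω => V ω k))] with ω h₁ h₂
  funext k
  rw [h₁, h₂ k]

section Independence

variable {Ω ζ 𝒱 β : Type*} {mΩ : MeasurableSpace Ω} [MeasurableSpace ζ] [MeasurableSpace 𝒱]
  [MeasurableSpace β] {μ : Measure Ω} [IsFiniteMeasure μ]

theorem IndepFun.condDistrib_ae_eq_const [StandardBorelSpace 𝒱] [Nonempty 𝒱] {Z : Ω → ζ}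
    {V : Ω → 𝒱} (hZ : Measurable Z) (hV : Measurable V) (h : IndepFun Z V μ) :
    condDistrib V Z μ =ᵐ[μ.map Z] Kernel.const ζ (μ.map V) :=
  condDistrib_ae_eq_of_measure_eq_compProd Z hV.aemeasurable <| by
    rw [Measure.compProd_const,
      ← (indepFun_iff_map_prod_eq_prod_map_map hZ.aemeasurable hV.aemeasurable).1 h]

theorem IndepFun.condDistrib_prod_ae_eq_prodMkLeft [StandardBorelSpace β] [Nonempty β]
    {B : Ω → β} {V : Ω → 𝒱} {Z : Ω → ζ} (hB : Measurable B) (hV : Measurable V)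
    (hZ : Measurable Z) (h : IndepFun (fun ω => (B ω, V ω)) Z μ) :
    condDistrib B (fun ω => (Z ω, V ω)) μ =ᵐ[μ.map fun ω => (Z ω, V ω)]
      (condDistrib B V μ).prodMkLeft ζ := by
  refine condDistrib_ae_eq_of_measure_eq_compProd _ hB.aemeasurable
    (Measure.ext_prod₃' fun {C D T} hC hD hT => ?_)
  have hZV : μ.map (fun ω => (Z ω, V ω)) = (μ.map Z).prod (μ.map V) :=
    (indepFun_iff_map_prod_eq_prod_map_map hZ.aemeasurable hV.aemeasurable).1
      (h.comp measurable_snd measurable_id).symm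
  have hVB : ∫⁻ v in D, condDistrib B V μ v T ∂μ.map V = μ (V ⁻¹' D ∩ B ⁻¹' T) := by
    rw [← Measure.compProd_apply_prod hD hT, compProd_map_condDistrib hB.aemeasurable,
      Measure.map_apply (hV.prodMk hB) (hD.prod hT), mk_preimage_prod]
  have hpre : (fun ω => ((Z ω, V ω), B ω)) ⁻¹' (C ×ˢ D) ×ˢ T
      = (fun ω => (B ω, V ω)) ⁻¹' (T ×ˢ D) ∩ Z ⁻¹' C := by
    ext ω
    simp only [mem_preimage, mem_prod, mem_inter_iff]
    tauto
  rw [Measure.map_apply ((hZ.prodMk hV).prodMk hB) ((hC.prod hD).prod hT),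
    Measure.compProd_apply_prod (hC.prod hD) hT, hZV, ← Measure.prod_restrict]
  simp only [Kernel.prodMkLeft_apply]
  rw [hpre, h.measure_inter_preimage_eq_mul _ _ (hT.prod hD) hC,
    ← lintegral_map (Kernel.measurable_coe _ hT) measurable_snd, Measure.map_snd_prod,
    lintegral_smul_measure, hVB, Measure.restrict_apply_univ, Measure.map_apply hZ hC,
    mk_preimage_prod, inter_comm, smul_eq_mul, mul_comm]

theorem IndepFun.condExp_indicator_ae_eq_condDistrib [StandardBorelSpace β] [Nonempty β]
    {B : Ω → β} {V : Ω → 𝒱} {Z : Ω → ζ} (h : IndepFun (fun ω => (B ω, V ω)) Z μ)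
    (hB : Measurable B) (hV : Measurable V) (hZ : Measurable Z) {t : Set β}
    (ht : MeasurableSet t) :
    μ⟦B ⁻¹' t | MeasurableSpace.comap (fun ω => (Z ω, V ω)) inferInstance⟧
      =ᵐ[μ] fun ω => (condDistrib B V μ (V ω)).real t := by
  filter_upwards [condDistrib_ae_eq_condExp (hZ.prodMk hV) hB ht,
    ae_of_ae_map (hZ.prodMk hV).aemeasurable (h.condDistrib_prod_ae_eq_prodMkLeft hB hV hZ)]
    with ω h₁ h₂
  rw [← h₁, h₂, Kernel.prodMkLeft_apply]

end Independence

theorem condIndepFun_of_condExp_ae_eq_comp {Ω β β' γ δ : Type*} {mΩ : MeasurableSpace Ω}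
    [StandardBorelSpace Ω] {μ : Measure Ω} [IsFiniteMeasure μ] [MeasurableSpace β]
    [MeasurableSpace β'] [MeasurableSpace γ] [mδ : MeasurableSpace δ] {R : Ω → γ} {Y : Ω → δ}
    {W : Ω → β'} {B : Ω → β} (hR : Measurable R) (hY : Measurable Y)
    (hW : Measurable[mδ.comap Y] W) (hB : Measurable B) {φ : δ → γ} (hφ : Measurable φ)
    (hRY : R =ᵐ[μ] φ ∘ Y)
    (hcond : ∀ t, MeasurableSet t →
      ∃ g : γ → ℝ, Measurable g ∧ μ⟦B ⁻¹' t | mδ.comap Y⟧ =ᵐ[μ] g ∘ R) :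
    W ⟂ᵢ[R, hR; μ] B := by
  have hW' : Measurable W := hW.mono hY.comap_le le_rfl
  rw [condIndepFun_iff_condExp_inter_preimage_eq_mul hW' hB]
  intro s t hs ht
  obtain ⟨g, hg, hcg⟩ := hcond t ht
  set c := μ⟦B ⁻¹' t | mδ.comap Y⟧
  have hc_meas : AEStronglyMeasurable[MeasurableSpace.comap R inferInstance] c μ :=
    ⟨g ∘ R, (hg.comp (comap_measurable R)).stronglyMeasurable, hcg⟩
  -- Every `σ(R)`-set is a.e. a `σ(Y)`-set, and `W ⁻¹' s` is a `σ(Y)`-set.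
  have key : ∀ A, MeasurableSet[MeasurableSpace.comap R inferInstance] A → ∀ s, MeasurableSet s →
      ∫ ω in A, (W ⁻¹' s).indicator c ω ∂μ
        = ∫ ω in A, (W ⁻¹' s ∩ B ⁻¹' t).indicator (fun _ => (1 : ℝ)) ω ∂μ := by
    rintro _ ⟨E, hE, rfl⟩ s hs
    have hAA' : R ⁻¹' E =ᵐ[μ] Y ⁻¹' (φ ⁻¹' E) := by
      filter_upwards [hRY] with ω hω
      change (R ω ∈ E) = (φ (Y ω) ∈ E)
      rw [hω, Function.comp_apply]
    rw [setIntegral_congr_set hAA', setIntegral_congr_set hAA', setIntegral_indicator (hW' hs),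
      setIntegral_condExp hY.comap_le ((integrable_const 1).indicator (hB ht))
        ((show MeasurableSet[mδ.comap Y] (Y ⁻¹' (φ ⁻¹' E)) from ⟨_, hφ hE, rfl⟩).inter (hW hs)),
      ← setIntegral_indicator (hW' hs), indicator_indicator]
  have hc : c =ᵐ[μ] μ⟦B ⁻¹' t | MeasurableSpace.comap R inferInstance⟧ :=
    ae_eq_condExp_of_forall_setIntegral_eq hR.comap_le ((integrable_const 1).indicator (hB ht))
      (fun _ _ _ => integrable_condExp.integrableOn)
      (fun A hA _ => by simpa using key A hA univ .univ) hc_meas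
  have hmul : (W ⁻¹' s).indicator c = c * (W ⁻¹' s).indicator fun _ => (1 : ℝ) := by
    ext ω
    by_cases hω : ω ∈ W ⁻¹' s <;> simp [hω]
  calc μ⟦W ⁻¹' s ∩ B ⁻¹' t | MeasurableSpace.comap R inferInstance⟧
      =ᵐ[μ] μ[(W ⁻¹' s).indicator c | MeasurableSpace.comap R inferInstance] :=
        (ae_eq_condExp_of_forall_setIntegral_eq hR.comap_le
          ((integrable_const 1).indicator ((hW' hs).inter (hB ht)))
          (fun _ _ _ => integrable_condExp.integrableOn)
          (fun A hA _ => by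
            rw [setIntegral_condExp hR.comap_le (integrable_condExp.indicator (hW' hs)) hA,
              key A hA s hs])
          stronglyMeasurable_condExp.aestronglyMeasurable).symm
    _ =ᵐ[μ] c * μ⟦W ⁻¹' s | MeasurableSpace.comap R inferInstance⟧ := by
        rw [hmul]
        exact condExp_mul_of_aestronglyMeasurable_left hc_meas
          (hmul ▸ integrable_condExp.indicator (hW' hs)) ((integrable_const 1).indicator (hW' hs))
    _ =ᵐ[μ] fun ω => (μ⟦W ⁻¹' s | MeasurableSpace.comap R inferInstance⟧) ω *
          (μ⟦B ⁻¹' t | MeasurableSpace.comap R inferInstance⟧) ω := by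
        filter_upwards [hc] with ω hω
        rw [Pi.mul_apply, hω, mul_comm]

end ProbabilityTheory

section Rank

variable {Ω ζ : Type*} {mΩ : MeasurableSpace Ω} [MeasurableSpace ζ] {μ : Measure Ω}
  [IsProbabilityMeasure μ] {Z : Ω → ζ} {V : Ω → ℝ} {h : ζ → ℝ → ℝ} {F : ζ → ℝ → ℝ}

theorem IsRegCondCDF.ae_eq_cdf_map (hZ : Measurable Z) (hV : Measurable V)
    (hind : IndepFun Z V μ) (hh : Measurable fun p : ζ × ℝ => h p.1 p.2)
    (hF : IsRegCondCDF μ (fun ω => h (Z ω) (V ω)) Z F) :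
    ∀ᵐ ω ∂μ, F (Z ω) = cdf ((μ.map V).map (h (Z ω))) := by
  obtain ⟨-, hFrc, -, hFcond⟩ := hF
  have : IsProbabilityMeasure (μ.map V) := Measure.isProbabilityMeasure_map hV.aemeasurable
  have hcond : ∀ x, ∀ᵐ ω ∂μ, F (Z ω) x = cdf ((μ.map V).map (h (Z ω))) x := by
    intro x
    have hf : StronglyMeasurable ({p : ζ × ℝ | h p.1 p.2 ≤ x}.indicator fun _ => (1 : ℝ)) :=
      (measurable_const.indicator (hh measurableSet_Iic)).stronglyMeasurable
    filter_upwards [hFcond x, condExp_prod_ae_eq_integral_condDistrib hZ hV.aemeasurable hf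
      ((integrable_const 1).indicator (hh.comp (hZ.prodMk hV) measurableSet_Iic)),
      ae_of_ae_map hZ.aemeasurable (hind.condDistrib_ae_eq_const hZ hV)] with ω h₁ h₂ h₃
    have hmeas : Measurable (h (Z ω)) := hh.comp measurable_prodMk_left
    have : IsProbabilityMeasure ((μ.map V).map (h (Z ω))) :=
      Measure.isProbabilityMeasure_map hmeas.aemeasurable
    rw [cdf_eq_real, map_measureReal_apply hmeas measurableSet_Iic,
      ← integral_indicator_one (hmeas measurableSet_Iic), ← Kernel.const_apply (μ.map V) (Z ω),
      ← h₃, h₁]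
    exact h₂
  filter_upwards [ae_all_iff.2 fun q : ℚ => hcond q] with ω hω
  exact eq_of_continuousWithinAt_Ici_of_forall_rat_eq (hFrc _) (cdf _).right_continuous hω

theorem IsRegCondCDF.ae_apply_eq_cdf (hZ : Measurable Z) (hV : Measurable V)
    (hind : IndepFun Z V μ) (hh : Measurable fun p : ζ × ℝ => h p.1 p.2)
    (hmono : ∀ z, StrictMono (h z)) (hF : IsRegCondCDF μ (fun ω => h (Z ω) (V ω)) Z F) :
    ∀ᵐ ω ∂μ, F (Z ω) (h (Z ω) (V ω)) = cdf (μ.map V) (V ω) := by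
  have : IsProbabilityMeasure (μ.map V) := Measure.isProbabilityMeasure_map hV.aemeasurable
  filter_upwards [hF.ae_eq_cdf_map hZ hV hind hh] with ω hω
  have hmeas : Measurable (h (Z ω)) := (hmono _).monotone.measurable
  have : IsProbabilityMeasure ((μ.map V).map (h (Z ω))) :=
    Measure.isProbabilityMeasure_map hmeas.aemeasurable
  rw [hω, cdf_eq_real, cdf_eq_real, map_measureReal_apply hmeas measurableSet_Iic]
  congr 1
  ext v
  exact (hmono _).le_iff_le

end Rank

theorem measurable_endogenous {Ω : Type*} {m : MeasurableSpace Ω} {d1 d2 db dx : ℕ}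
    (hdb : db ≤ dx) {Z₁ : Ω → Fin d1 → ℝ} {Z₂ : Ω → Fin d2 → ℝ} {V : Ω → Fin db → ℝ}
    (hZ : Measurable[m] fun ω => (Z₁ ω, Z₂ ω)) (hV : Measurable[m] V)
    {h : Fin db → ((Fin d1 → ℝ) × (Fin d2 → ℝ)) → ℝ → ℝ}
    (hh : ∀ k, Measurable fun p : ((Fin d1 → ℝ) × (Fin d2 → ℝ)) × ℝ => h k p.1 p.2)
    {g : Fin dx → (Fin db → ℝ) → (Fin d1 → ℝ) → ℝ}
    (hg : ∀ k, Measurable fun p : (Fin db → ℝ) × (Fin d1 → ℝ) => g k p.1 p.2)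
    {X : Fin dx → Ω → ℝ}
    (hbasic : ∀ k : Fin db, X (Fin.castLE hdb k) = fun ω => h k (Z₁ ω, Z₂ ω) (V ω k))
    (hderived : ∀ k : Fin dx, db ≤ (k : ℕ) →
      X k = fun ω => g k (fun j : Fin db => X (Fin.castLE hdb j) ω) (Z₁ ω)) :
    Measurable[m] fun ω k => X k ω := by
  have hbasic' : ∀ j : Fin db, Measurable[m] (X (Fin.castLE hdb j)) := fun j => by
    rw [hbasic j]
    exact (hh j).comp (hZ.prodMk ((measurable_pi_apply j).comp hV))
  refine measurable_pi_lambda _ fun k => ?_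
  by_cases hk : (k : ℕ) < db
  · exact hbasic' ⟨k, hk⟩
  · rw [hderived k (not_lt.1 hk)]
    exact (hg k).comp ((measurable_pi_lambda _ hbasic').prodMk hZ.fst)

theorem regressors_and_coefficients_condIndep_given_rank_general
    {Ω : Type*} [mΩ : MeasurableSpace Ω] [StandardBorelSpace Ω]
    (μ : Measure Ω) [IsProbabilityMeasure μ]
    {d1 d2 db dx dw : ℕ} (hdb : db ≤ dx)
    (Z₁ : Ω → Fin d1 → ℝ) (Z₂ : Ω → Fin d2 → ℝ)
    (hZ₁ : Measurable Z₁) (hZ₂ : Measurable Z₂)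
    (V : Ω → Fin db → ℝ) (hV : Measurable V)
    (h : Fin db → ((Fin d1 → ℝ) × (Fin d2 → ℝ)) → ℝ → ℝ)
    (hhmeas : ∀ k, Measurable fun p : ((Fin d1 → ℝ) × (Fin d2 → ℝ)) × ℝ => h k p.1 p.2)
    (hhmono : ∀ k z, StrictMono (h k z))
    (g : Fin dx → (Fin db → ℝ) → (Fin d1 → ℝ) → ℝ)
    (hgmeas : ∀ k, Measurable fun p : (Fin db → ℝ) × (Fin d1 → ℝ) => g k p.1 p.2)
    (X : Fin dx → Ω → ℝ)
    (hXbasic : ∀ k : Fin db, X (Fin.castLE hdb k) = fun ω => h k (Z₁ ω, Z₂ ω) (V ω k))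
    (hXderived : ∀ k : Fin dx, db ≤ (k : ℕ) →
      X k = fun ω => g k (fun j : Fin db => X (Fin.castLE hdb j) ω) (Z₁ ω))
    (B : Ω → Fin dw → ℝ) (hB : Measurable B)
    (hindep : IndepFun (fun ω => (B ω, V ω)) (fun ω => (Z₁ ω, Z₂ ω)) μ)
    (F : Fin db → ((Fin d1 → ℝ) × (Fin d2 → ℝ)) → ℝ → ℝ)
    (hF : ∀ k, IsRegCondCDF μ (X (Fin.castLE hdb k)) (fun ω => (Z₁ ω, Z₂ ω)) (F k))
    (R : Ω → Fin db → ℝ)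
    (hRdef : R = fun ω k => F k (Z₁ ω, Z₂ ω) (X (Fin.castLE hdb k) ω))
    (hRmeas : Measurable R)
    (W : Ω → ℝ × (Fin dx → ℝ) × (Fin d1 → ℝ))
    (hWdef : W = fun ω => (1, fun k => X k ω, Z₁ ω)) :
    CondIndepFun (MeasurableSpace.comap R inferInstance) hRmeas.comap_le W B μ := by
  set ν : Fin db → Measure ℝ := fun k => μ.map fun ω => V ω k
  have hZ : Measurable fun ω => (Z₁ ω, Z₂ ω) := hZ₁.prodMk hZ₂
  have hVk : ∀ k, Measurable fun ω => V ω k := fun k => (measurable_pi_apply k).comp hV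
  have hR : R =ᵐ[μ] fun ω k => cdf (ν k) (V ω k) := by
    refine (ae_all_iff.2 fun k => ?_).mono fun ω hω => funext hω
    have hFk := hF k
    rw [hXbasic k] at hFk
    simpa only [hRdef, hXbasic k] using hFk.ae_apply_eq_cdf hZ (hVk k)
      (hindep.comp ((measurable_pi_apply k).comp measurable_snd) measurable_id).symm
      (hhmeas k) (hhmono k)
  have hVR : V =ᵐ[μ] fun ω k => quantile (ν k) (R ω k) := ae_eq_quantile_of_ae_eq_cdf hVk hR
  refine condIndepFun_of_condExp_ae_eq_comp hRmeas (hZ.prodMk hV) ?_ hB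
    (φ := fun p k => cdf (ν k) (p.2 k)) ?_ hR fun t ht =>
      ⟨fun r => (condDistrib B V μ fun k => quantile (ν k) (r k)).real t, ?_, ?_⟩
  · have hZV := comap_measurable (m := inferInstance) fun ω => ((Z₁ ω, Z₂ ω), V ω)
    rw [hWdef]
    exact measurable_const.prodMk ((measurable_endogenous hdb hZV.fst hZV.snd hhmeas hgmeas
      hXbasic hXderived).prodMk hZV.fst.fst)
  · exact measurable_pi_lambda _ fun k =>
      (cdf (ν k)).mono.measurable.comp ((measurable_pi_apply k).comp measurable_snd)
  · exact (Kernel.measurable_coe _ ht).ennreal_toReal.comp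
      (measurable_pi_lambda _ fun k => (measurable_quantile _).comp (measurable_pi_apply k))
  · filter_upwards [hindep.condExp_indicator_ae_eq_condDistrib hB hV hZ ht, hVR] with ω h₁ h₂
    rw [h₁, h₂]
    rfl

/-- Proposition 1, second part. With basic endogenous variables
`X_k = h_k(Z, V_k)` (`h_k` strictly increasing in its second argument, `V_k` atomless),
derived endogenous variables `X_k = g_k(X₁,…,X_{d_b}, Z₁)`, instrument exogeneity
`(B, V) ⊥ Z` where `Z = (Z₁, Z₂)`, and conditional ranks `R_k = F_{X_k|Z}(X_k | Z)`,
the regressor vector `W = (1, X', Z₁')'` and the random coefficients `B` are conditionally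
independent given `σ(R)`. -/
theorem regressors_and_coefficients_condIndep_given_rank
    {Ω : Type*} [mΩ : MeasurableSpace Ω] [StandardBorelSpace Ω] [Nonempty Ω]
    (μ : Measure Ω) [IsProbabilityMeasure μ]
    {d1 d2 db dx dw : ℕ} (hdb : db ≤ dx)
    (Z₁ : Ω → Fin d1 → ℝ) (Z₂ : Ω → Fin d2 → ℝ)
    (hZ₁ : Measurable Z₁) (hZ₂ : Measurable Z₂)
    (V : Ω → Fin db → ℝ) (hV : Measurable V)
    (hVatomless : ∀ (k : Fin db) (v : ℝ), μ {ω | V ω k = v} = 0)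
    (h : Fin db → ((Fin d1 → ℝ) × (Fin d2 → ℝ)) → ℝ → ℝ)
    (hhmeas : ∀ k, Measurable fun p : ((Fin d1 → ℝ) × (Fin d2 → ℝ)) × ℝ => h k p.1 p.2)
    (hhmono : ∀ k z, StrictMono (h k z))
    (g : Fin dx → (Fin db → ℝ) → (Fin d1 → ℝ) → ℝ)
    (hgmeas : ∀ k, Measurable fun p : (Fin db → ℝ) × (Fin d1 → ℝ) => g k p.1 p.2)
    (X : Fin dx → Ω → ℝ)
    (hXbasic : ∀ k : Fin db, X (Fin.castLE hdb k) = fun ω => h k (Z₁ ω, Z₂ ω) (V ω k))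
    (hXderived : ∀ k : Fin dx, db ≤ (k : ℕ) →
      X k = fun ω => g k (fun j : Fin db => X (Fin.castLE hdb j) ω) (Z₁ ω))
    (B : Ω → Fin dw → ℝ) (hB : Measurable B)
    (hindep : IndepFun (fun ω => (B ω, V ω)) (fun ω => (Z₁ ω, Z₂ ω)) μ)
    (F : Fin db → ((Fin d1 → ℝ) × (Fin d2 → ℝ)) → ℝ → ℝ)
    (hF : ∀ k, IsRegCondCDF μ (X (Fin.castLE hdb k)) (fun ω => (Z₁ ω, Z₂ ω)) (F k))
    (R : Ω → Fin db → ℝ)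
    (hRdef : R = fun ω k => F k (Z₁ ω, Z₂ ω) (X (Fin.castLE hdb k) ω))
    (hRmeas : Measurable R)
    (W : Ω → ℝ × (Fin dx → ℝ) × (Fin d1 → ℝ))
    (hWdef : W = fun ω => (1, fun k => X k ω, Z₁ ω)) :
    CondIndepFun (MeasurableSpace.comap R inferInstance) hRmeas.comap_le W B μ :=
  regressors_and_coefficients_condIndep_given_rank_general (mΩ := mΩ) μ hdb Z₁ Z₂ hZ₁ hZ₂ V hV h
    hhmeas hhmono g hgmeas X hXbasic hXderived B hB hindep F hF R hRdef hRmeas W hWdef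
end

section
/- Suppose Z is a random vector in ℝ^{d_z}, V is a real random variable with atomless (continuous) distribution, h : ℝ^{d_z} × ℝ → ℝ is measurable and strictly increasing in its second argument, X = h(Z, V), and V is independent of Z. Then the conditional rank R = F_{X|Z}(X | Z) is uniformly distributed on the interval [0, 1]; that is, the law of R is the uniform probability measure on [0,1]. -/
open MeasureTheory ProbabilityTheory Set Filter Topology

theorem eq_of_forall_rat_of_continuousWithinAt_Ici {f g : ℝ → ℝ}
    (hf : ∀ x, ContinuousWithinAt f (Ici x) x) (hg : ∀ x, ContinuousWithinAt g (Ici x) x)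
    (hfg : ∀ q : ℚ, f q = g q) : f = g := by
  funext x
  set s := Ioi x ∩ range ((↑) : ℚ → ℝ)
  have hsub : s ⊆ Ici x := inter_subset_left.trans Ioi_subset_Ici_self
  have hx : x ∈ closure (Ioi x) := by rw [closure_Ioi]; exact self_mem_Ici
  have : (𝓝[s] x).NeBot := mem_closure_iff_nhdsWithin_neBot.1 <|
    closure_minimal (Rat.denseRange_cast.open_subset_closure_inter isOpen_Ioi) isClosed_closure hx
  have hfg_near : f =ᶠ[𝓝[s] x] g := by
    filter_upwards [self_mem_nhdsWithin] with y ⟨_, q, hq⟩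
    rw [← hq, hfg]
  exact tendsto_nhds_unique (((hf x).mono hsub).tendsto.congr' hfg_near) ((hg x).mono hsub).tendsto

theorem ProbabilityTheory.continuous_cdf (ν : Measure ℝ) [IsProbabilityMeasure ν] [NullSingletonClass ν] :
    Continuous (cdf ν) := by
  refine continuous_iff_continuousAt.2 fun x => ?_
  rw [(monotone_cdf ν).continuousAt_iff_leftLim_eq_rightLim, StieltjesFunction.rightLim_eq]
  have hjump := (cdf ν).measure_singleton x
  rw [measure_cdf, measure_singleton, eq_comm, ENNReal.ofReal_eq_zero] at hjump
  linarith [(monotone_cdf ν).leftLim_le (le_refl x)]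

theorem ProbabilityTheory.measure_cdf_le_of_lt_one (ν : Measure ℝ) [IsProbabilityMeasure ν] [NullSingletonClass ν]
    {t : ℝ} (ht : t < 1) : ν {x | cdf ν x ≤ t} = ENNReal.ofReal t := by
  set S := {x | cdf ν x ≤ t}
  rcases S.eq_empty_or_nonempty with hS | hS
  · have ht₀ : t ≤ 0 := by
      by_contra! ht₀
      obtain ⟨x, hx⟩ := ((tendsto_cdf_atBot ν).eventually_lt_const ht₀).exists
      exact hS.subset hx.le
    rw [hS, measure_empty, ENNReal.ofReal_of_nonpos ht₀]
  have hbdd : BddAbove S := by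
    obtain ⟨y, hy⟩ := ((tendsto_cdf_atTop ν).eventually_const_lt ht).exists
    exact ⟨y, fun x hx => ((monotone_cdf ν).reflect_lt (lt_of_le_of_lt hx hy)).le⟩
  set x₀ := sSup S
  have hx₀ : x₀ ∈ S := (isClosed_le (continuous_cdf ν) continuous_const).csSup_mem hS hbdd
  have hS_eq : S = Iic x₀ :=
    Subset.antisymm (fun x hx => le_csSup hbdd hx) fun x hx => (monotone_cdf ν hx).trans hx₀
  have hcdf : cdf ν x₀ = t := by
    refine le_antisymm hx₀ (ge_of_tendsto
      ((continuous_cdf ν).continuousAt.tendsto.mono_left (nhdsWithin_le_nhds (s := Ioi x₀))) ?_)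
    filter_upwards [self_mem_nhdsWithin] with y hy
    exact (not_le.1 fun h => (not_le.2 hy) (le_csSup hbdd h)).le
  rw [hS_eq, ← ofReal_cdf, hcdf]

theorem ProbabilityTheory.map_cdf_eq_restrict_Icc (ν : Measure ℝ) [IsProbabilityMeasure ν] [NullSingletonClass ν] :
    ν.map (cdf ν) = volume.restrict (Icc 0 1) := by
  have : IsProbabilityMeasure (ν.map (cdf ν)) :=
    Measure.isProbabilityMeasure_map (monotone_cdf ν).measurable.aemeasurable
  refine Measure.ext_of_Iic _ _ fun t => ?_
  have hIcc : Iic t ∩ Icc 0 1 = Icc 0 (min t 1) := by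
    ext y
    simp only [mem_inter_iff, mem_Iic, mem_Icc, le_min_iff]
    tauto
  rw [Measure.map_apply (monotone_cdf ν).measurable measurableSet_Iic,
    Measure.restrict_apply measurableSet_Iic, hIcc, Real.volume_Icc, sub_zero]
  rcases lt_or_ge t 1 with ht | ht
  · rw [min_eq_left ht.le]
    exact measure_cdf_le_of_lt_one ν ht
  · rw [min_eq_right ht, ENNReal.ofReal_one, ← measure_univ (μ := ν)]
    exact congr_arg ν (eq_univ_of_forall fun x => (cdf_le_one ν x).trans ht)

theorem ProbabilityTheory.Kernel.measurable_cdf_apply {β : Type*} [MeasurableSpace β]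
    (κ : Kernel β ℝ) [IsMarkovKernel κ] : Measurable fun p : β × ℝ => cdf (κ p.1) p.2 := by
  have hW : MeasurableSet {q : (β × ℝ) × ℝ | q.2 ≤ q.1.2} :=
    measurableSet_le measurable_snd (measurable_snd.comp measurable_fst)
  have := (Kernel.measurable_kernel_prodMk_left (κ := κ.comap Prod.fst measurable_fst) hW)
  convert this.ennreal_toReal using 2 with p
  rw [cdf_eq_real, measureReal_def]
  rfl

theorem ProbabilityTheory.map_compProd_cdf_eq_restrict_Icc {β : Type*} [MeasurableSpace β] (ρ : Measure β)
    [IsProbabilityMeasure ρ] (κ : Kernel β ℝ) [IsMarkovKernel κ] [∀ b, NullSingletonClass (κ b)] :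
    (ρ ⊗ₘ κ).map (fun p => cdf (κ p.1) p.2) = volume.restrict (Icc 0 1) := by
  ext s hs
  have hsection : ∀ b, κ b (Prod.mk b ⁻¹' ((fun p => cdf (κ p.1) p.2) ⁻¹' s))
      = volume.restrict (Icc 0 1) s := fun b => by
    rw [← map_cdf_eq_restrict_Icc (κ b), Measure.map_apply (monotone_cdf _).measurable hs]
    rfl
  rw [Measure.map_apply κ.measurable_cdf_apply hs,
    Measure.compProd_apply (κ.measurable_cdf_apply hs)]
  simp_rw [hsection, lintegral_const, measure_univ, mul_one]

theorem IsRegCondCDF.ae_eq_cdf_condDistrib {Ω β : Type*} [MeasurableSpace Ω] [MeasurableSpace β]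
    {μ : Measure Ω} [IsFiniteMeasure μ] {X : Ω → ℝ} {Z : Ω → β} {F : β → ℝ → ℝ}
    (hF : IsRegCondCDF μ X Z F) (hX : Measurable X) (hZ : Measurable Z) :
    ∀ᵐ ω ∂μ, F (Z ω) = cdf (condDistrib X Z μ (Z ω)) := by
  have hrat : ∀ᵐ ω ∂μ, ∀ q : ℚ, F (Z ω) q = cdf (condDistrib X Z μ (Z ω)) q := by
    refine ae_all_iff.2 fun q => ?_
    filter_upwards [hF.2.2.2 q, condDistrib_ae_eq_condExp hZ hX measurableSet_Iic]
      with ω hFω hcond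
    rw [cdf_eq_real, hcond, hFω]
    rfl
  filter_upwards [hrat] with ω hω
  exact eq_of_forall_rat_of_continuousWithinAt_Ici (hF.2.1 _) (cdf _).right_continuous hω

theorem ProbabilityTheory.Kernel.map_id_prod_const_apply {β γ δ : Type*} [MeasurableSpace β]
    [MeasurableSpace γ] [MeasurableSpace δ] (ν : Measure γ) [SFinite ν] {f : β × γ → δ}
    (hf : Measurable f) (b : β) :
    (Kernel.id ×ₖ Kernel.const β ν).map f b = ν.map (fun c => f (b, c)) := by
  rw [Kernel.map_apply _ hf, Kernel.prod_apply, Kernel.id_apply, Kernel.const_apply,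
    Measure.dirac_prod, Measure.map_map hf measurable_prodMk_left]
  rfl

theorem ProbabilityTheory.IndepFun.map_prodMk_eq_compProd {Ω β γ δ : Type*} [MeasurableSpace Ω]
    [MeasurableSpace β] [MeasurableSpace γ] [MeasurableSpace δ] {μ : Measure Ω}
    [IsFiniteMeasure μ] {Z : Ω → β} {V : Ω → γ} (hindep : IndepFun Z V μ) (hZ : Measurable Z)
    (hV : Measurable V) {f : β × γ → δ} (hf : Measurable f) :
    μ.map (fun ω => (Z ω, f (Z ω, V ω)))
      = μ.map Z ⊗ₘ (Kernel.id ×ₖ Kernel.const β (μ.map V)).map f := by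
  ext s hs
  have hs' : MeasurableSet ((fun p => (p.1, f p)) ⁻¹' s) := (measurable_fst.prodMk hf) hs
  have hsection : ∀ b, (Kernel.id ×ₖ Kernel.const β (μ.map V)).map f b (Prod.mk b ⁻¹' s)
      = μ.map V (Prod.mk b ⁻¹' ((fun p => (p.1, f p)) ⁻¹' s)) := fun b => by
    rw [Kernel.map_id_prod_const_apply _ hf,
      Measure.map_apply (by fun_prop) (measurable_prodMk_left hs)]
    rfl
  rw [Measure.compProd_apply hs, lintegral_congr hsection, ← Measure.prod_apply hs',
    ← (indepFun_iff_map_prod_eq_prod_map_map hZ.aemeasurable hV.aemeasurable).1 hindep,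
    Measure.map_apply (hZ.prodMk hV) hs', Measure.map_apply (by fun_prop) hs]
  rfl

theorem MeasureTheory.Measure.nullSingletonClass_map {α β : Type*} [MeasurableSpace α]
    [MeasurableSpace β] [MeasurableSingletonClass β] {μ : Measure α} [NullSingletonClass μ]
    {f : α → β} (hf : Measurable f) (hinj : Function.Injective f) :
    NullSingletonClass (μ.map f) :=
  ⟨fun y => by
    rw [Measure.map_apply hf (measurableSet_singleton y)]
    exact (subsingleton_singleton.preimage hinj).measure_zero μ⟩

/-- If `X = h(Z, V)` with `h` strictly increasing in its second argument
and `V` independent of `Z` with atomless distribution, then the conditional rank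
`R = F_{X|Z}(X | Z)` is uniformly distributed on `[0, 1]`: its law is the uniform
probability measure on `[0,1]` (Lebesgue measure restricted to `[0,1]`). -/
theorem conditional_rank_uniform
    {Ω : Type*} [MeasurableSpace Ω] (μ : Measure Ω) [IsProbabilityMeasure μ]
    {dz : ℕ} (Z : Ω → Fin dz → ℝ) (hZ : Measurable Z)
    (V : Ω → ℝ) (hV : Measurable V)
    (hVatomless : ∀ v : ℝ, μ {ω | V ω = v} = 0)
    (h : (Fin dz → ℝ) → ℝ → ℝ)
    (hhmeas : Measurable fun p : (Fin dz → ℝ) × ℝ => h p.1 p.2)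
    (hhmono : ∀ z, StrictMono (h z))
    (X : Ω → ℝ) (hX : X = fun ω => h (Z ω) (V ω))
    (hindep : IndepFun V Z μ)
    (F : (Fin dz → ℝ) → ℝ → ℝ) (hF : IsRegCondCDF μ X Z F)
    (R : Ω → ℝ) (hR : R = fun ω => F (Z ω) (X ω)) :
    μ.map R = volume.restrict (Set.Icc (0 : ℝ) 1) := by
  have : IsProbabilityMeasure (μ.map Z) := Measure.isProbabilityMeasure_map hZ.aemeasurable
  have : IsProbabilityMeasure (μ.map V) := Measure.isProbabilityMeasure_map hV.aemeasurable
  set κ := (Kernel.id ×ₖ Kernel.const _ (μ.map V)).map fun p : (Fin dz → ℝ) × ℝ => h p.1 p.2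
  have : IsMarkovKernel κ := Kernel.IsMarkovKernel.map _ hhmeas
  have : NullSingletonClass (μ.map V) :=
    ⟨fun v => by rw [Measure.map_apply hV (measurableSet_singleton v)]; exact hVatomless v⟩
  have : ∀ z, NullSingletonClass (κ z) := fun z => by
    rw [Kernel.map_id_prod_const_apply _ hhmeas]
    exact Measure.nullSingletonClass_map (hhmeas.comp measurable_prodMk_left) (hhmono z).injective
  have hXmeas : Measurable X := hX ▸ hhmeas.comp (hZ.prodMk hV)
  have hlaw : μ.map (fun ω => (Z ω, X ω)) = μ.map Z ⊗ₘ κ := by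
    subst hX
    exact hindep.symm.map_prodMk_eq_compProd hZ hV hhmeas
  have hcond : ∀ᵐ ω ∂μ, condDistrib X Z μ (Z ω) = κ (Z ω) :=
    ae_of_ae_map hZ.aemeasurable
      (condDistrib_ae_eq_of_measure_eq_compProd_of_measurable hZ hXmeas hlaw)
  have hR_ae : R =ᵐ[μ] fun ω => cdf (κ (Z ω)) (X ω) := by
    filter_upwards [hF.ae_eq_cdf_condDistrib hXmeas hZ, hcond] with ω hFω hκω
    simp only [hR, hFω, hκω]
  calc μ.map R = (μ.map fun ω => (Z ω, X ω)).map fun p => cdf (κ p.1) p.2 := by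
        rw [Measure.map_congr hR_ae, Measure.map_map κ.measurable_cdf_apply (hZ.prodMk hXmeas)]
        rfl
    _ = volume.restrict (Icc 0 1) := by rw [hlaw, map_compProd_cdf_eq_restrict_Icc]
end
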